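/- arXiv:2507.01358 — 2 statements merged into one kernel-verified Lean document; each statement's English description precedes it below -/
import Mathlib

section
/- The set 2I = 2T ∪ ζ·2T ∪ ζ²·2T ∪ ζ³·2T ∪ ζ⁴·2T, where ζ = (τ + τ⁻¹ i + j)/2 with τ = (1+√5)/2, is a subgroup of the unit quaternions of order 120. -/
/-!
All coordinates of the elements of `2I` lie in `ℚ(φ)`, and `ℍ[ℚ(φ)]` embeds into `ℍ[ℝ]`
coefficientwise. In `ℍ[ℚ(φ)]` equality is decidable, so the finitely many identities behind the
theorem are checked by evaluation in the kernel: `2T · 2T ⊆ 2T`, `2I · ζ ⊆ 2I`, `normSq = 1` on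
`2I`, `2I` closed under conjugation, and `#2I = 120`. Closure of `2I = ⋃ₐ ζᵃ · 2T` then follows
from the first two, since `x · ζᵇ t = (x ζᵇ) t = ζᶜ s t` with `ζᶜ s = x ζᵇ ∈ 2I`. Inverses are
conjugates because the norms are `1`.
-/

open Quaternion

/-- The quaternion group `Q₈ = {±1, ±i, ±j, ±k}`. -/
def Q8 : Set ℍ[ℝ] :=
  {1, -1, ⟨0,1,0,0⟩, -⟨0,1,0,0⟩, ⟨0,0,1,0⟩, -⟨0,0,1,0⟩, ⟨0,0,0,1⟩, -⟨0,0,0,1⟩}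

/-- `ω = (-1 + i + j + k)/2`. -/
noncomputable def omegaQ : ℍ[ℝ] := ⟨-(1/2), 1/2, 1/2, 1/2⟩

/-- The binary tetrahedral group `2T = Q₈ ∪ ωQ₈ ∪ ω²Q₈` as a set of quaternions. -/
def twoT : Set ℍ[ℝ] :=
  Q8 ∪ (fun x => omegaQ * x) '' Q8 ∪ (fun x => omegaQ ^ 2 * x) '' Q8

/-- The golden ratio `τ = (1+√5)/2`. -/
noncomputable def tau : ℝ := (1 + Real.sqrt 5) / 2

/-- `ζ = (τ + τ⁻¹ i + j)/2`. -/
noncomputable def zetaQ : ℍ[ℝ] := ⟨tau / 2, tau⁻¹ / 2, 1 / 2, 0⟩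

/-- The binary icosahedral group `2I = 2T ∪ ζ·2T ∪ ζ²·2T ∪ ζ³·2T ∪ ζ⁴·2T`. -/
noncomputable def twoI : Set ℍ[ℝ] :=
  twoT ∪ (fun x => zetaQ * x) '' twoT ∪ (fun x => zetaQ ^ 2 * x) '' twoT ∪
    (fun x => zetaQ ^ 3 * x) '' twoT ∪ (fun x => zetaQ ^ 4 * x) '' twoT

open Real
open scoped QuadraticAlgebra

namespace Quaternion

variable {R S : Type*}

instance [Zero R] [One R] [Neg R] [DecidableEq R] : DecidableEq ℍ[R] := (equivProd R).decidableEq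

variable [CommRing R] [CommRing S]

def map (f : R →+* S) : ℍ[R] →+* ℍ[S] where
  toFun x := (equivProd S).symm (f x.re, f x.imI, f x.imJ, f x.imK)
  map_one' := by ext <;> simp
  map_zero' := by ext <;> simp
  map_add' _ _ := by ext <;> simp
  map_mul' _ _ := by ext <;> simp

-- Unlike an anonymous constructor, whose type is `ℍ[R,-1,0,-1]`, these have type `ℍ[R]`, so that
-- `simp` lemmas about `ℍ[R]` apply to them.
variable (R) in
def unitI : ℍ[R] := ⟨0, 1, 0, 0⟩
variable (R) in
def unitJ : ℍ[R] := ⟨0, 0, 1, 0⟩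
variable (R) in
def unitK : ℍ[R] := ⟨0, 0, 0, 1⟩

variable (f : R →+* S) (x : ℍ[R])

@[simp] theorem map_re : (map f x).re = f x.re := rfl
@[simp] theorem map_imI : (map f x).imI = f x.imI := rfl
@[simp] theorem map_imJ : (map f x).imJ = f x.imJ := rfl
@[simp] theorem map_imK : (map f x).imK = f x.imK := rfl

@[simp] theorem map_mk (a b c d : R) : map f ⟨a, b, c, d⟩ = ⟨f a, f b, f c, f d⟩ := rfl

@[simp] theorem map_unitI : map f (unitI R) = unitI S := by
  ext <;> simp only [map_re, map_imI, map_imJ, map_imK] <;> simp [unitI]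
@[simp] theorem map_unitJ : map f (unitJ R) = unitJ S := by
  ext <;> simp only [map_re, map_imI, map_imJ, map_imK] <;> simp [unitJ]
@[simp] theorem map_unitK : map f (unitK R) = unitK S := by
  ext <;> simp only [map_re, map_imI, map_imJ, map_imK] <;> simp [unitK]

theorem map_star : map f (star x) = star (map f x) := by
  ext <;> simp

theorem normSq_map : normSq (map f x) = f (normSq x) := by
  simp [normSq_def']

theorem map_injective {f : R →+* S} (hf : Function.Injective f) :
    Function.Injective (map f) := fun _ _ h ↦
  ext _ _ (hf congr(($h).re)) (hf congr(($h).imI)) (hf congr(($h).imJ)) (hf congr(($h).imK))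

end Quaternion

theorem mul_mem_of_mem_iff_exists_pow_mul {M : Type*} [Monoid M] {S T : Set M} {z : M} {n : ℕ}
    (hS : ∀ x, x ∈ S ↔ ∃ a < n, ∃ t ∈ T, z ^ a * t = x)
    (hT : ∀ s ∈ T, ∀ t ∈ T, s * t ∈ T) (hz : ∀ x ∈ S, x * z ∈ S)
    {x y : M} (hx : x ∈ S) (hy : y ∈ S) : x * y ∈ S := by
  have hxz : ∀ b : ℕ, x * z ^ b ∈ S := by
    intro b
    induction b with
    | zero => simpa using hx
    | succ b ih => simpa [pow_succ, mul_assoc] using hz _ ih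
  obtain ⟨b, -, t, ht, rfl⟩ := (hS y).1 hy
  obtain ⟨c, hc, s, hs, hcs⟩ := (hS _).1 (hxz b)
  exact (hS _).2 ⟨c, hc, s * t, hT s hs t ht, by rw [← mul_assoc, hcs, mul_assoc]⟩

-- `ℚ(φ)`, with `ω` standing for `φ`: `ω ^ 2 = 1 + ω`.
abbrev GoldenField : Type := QuadraticAlgebra ℚ 1 1

-- Makes `GoldenField` a field.
instance : Fact (∀ r : ℚ, r ^ 2 ≠ 1 + 1 * r) := ⟨fun r hr ↦ by
  have : ((r : ℝ) - goldenRatio) * (r - goldenConj) = 0 := by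
    have hr' : (r : ℝ) ^ 2 = 1 + r := by rw [one_mul] at hr; exact_mod_cast hr
    linear_combination hr' - (r : ℝ) * goldenRatio_add_goldenConj + goldenRatio_mul_goldenConj
  rcases mul_eq_zero.1 this with h | h
  · exact goldenRatio_irrational.ne_rat r (sub_eq_zero.1 h).symm
  · exact goldenConj_irrational.ne_rat r (sub_eq_zero.1 h).symm⟩

noncomputable def goldenEmbedding : GoldenField →+* ℝ :=
  (QuadraticAlgebra.lift ⟨goldenRatio, by rw [← sq, goldenRatio_sq]; simp [add_comm]⟩ :
    GoldenField →ₐ[ℚ] ℝ)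

@[simp] theorem goldenEmbedding_omega : goldenEmbedding ω = goldenRatio := by
  simp [goldenEmbedding]

theorem inv_goldenRatio_eq_sub_one : goldenRatio⁻¹ = goldenRatio - 1 := by
  rw [inv_goldenRatio, ← one_sub_goldenConj]
  ring

def q8Golden : Finset ℍ[GoldenField] :=
  {1, -1, unitI _, -unitI _, unitJ _, -unitJ _, unitK _, -unitK _}

def omegaGolden : ℍ[GoldenField] := ⟨-(1/2), 1/2, 1/2, 1/2⟩

-- `ζ = (φ + φ⁻¹ i + j) / 2` with `φ⁻¹ = φ - 1`.
def zetaGolden : ℍ[GoldenField] := ⟨ω / 2, (ω - 1) / 2, 1 / 2, 0⟩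

def twoTGolden : Finset ℍ[GoldenField] :=
  q8Golden ∪ q8Golden.image (omegaGolden * ·) ∪ q8Golden.image (omegaGolden ^ 2 * ·)

def twoIGolden : Finset ℍ[GoldenField] :=
  twoTGolden ∪ twoTGolden.image (zetaGolden * ·) ∪ twoTGolden.image (zetaGolden ^ 2 * ·) ∪
    twoTGolden.image (zetaGolden ^ 3 * ·) ∪ twoTGolden.image (zetaGolden ^ 4 * ·)

theorem card_twoIGolden : twoIGolden.card = 120 := by decide +kernel

theorem twoTGolden_mul_mem : ∀ s ∈ twoTGolden, ∀ t ∈ twoTGolden, s * t ∈ twoTGolden := by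
  decide +kernel

theorem twoIGolden_mul_zetaGolden_mem : ∀ x ∈ twoIGolden, x * zetaGolden ∈ twoIGolden := by
  decide +kernel

theorem star_mem_twoIGolden : ∀ x ∈ twoIGolden, star x ∈ twoIGolden := by decide +kernel

theorem normSq_eq_one_of_mem_twoIGolden : ∀ x ∈ twoIGolden, normSq x = 1 := by decide +kernel

theorem mem_twoIGolden_iff {x : ℍ[GoldenField]} :
    x ∈ twoIGolden ↔ ∃ a < 5, ∃ t ∈ twoTGolden, zetaGolden ^ a * t = x := by
  simp only [twoIGolden, Finset.mem_union, Finset.mem_image]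
  constructor
  · rintro ((((h | ⟨t, ht, rfl⟩) | ⟨t, ht, rfl⟩) | ⟨t, ht, rfl⟩) | ⟨t, ht, rfl⟩)
    exacts [⟨0, by norm_num, x, h, by simp⟩, ⟨1, by norm_num, t, ht, by simp⟩,
      ⟨2, by norm_num, t, ht, rfl⟩, ⟨3, by norm_num, t, ht, rfl⟩, ⟨4, by norm_num, t, ht, rfl⟩]
  · rintro ⟨a, ha, t, ht, rfl⟩
    interval_cases a
    exacts [Or.inl (Or.inl (Or.inl (Or.inl (by simpa using ht)))),
      Or.inl (Or.inl (Or.inl (Or.inr ⟨t, ht, by rw [pow_one]⟩))),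
      Or.inl (Or.inl (Or.inr ⟨t, ht, rfl⟩)), Or.inl (Or.inr ⟨t, ht, rfl⟩), Or.inr ⟨t, ht, rfl⟩]

theorem one_mem_twoIGolden : 1 ∈ twoIGolden :=
  mem_twoIGolden_iff.2 ⟨0, by norm_num, 1, by simp [twoTGolden, q8Golden], by simp⟩

theorem twoIGolden_mul_mem {x y : ℍ[GoldenField]} (hx : x ∈ twoIGolden) (hy : y ∈ twoIGolden) :
    x * y ∈ twoIGolden :=
  mul_mem_of_mem_iff_exists_pow_mul (S := (twoIGolden : Set ℍ[GoldenField]))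
    (T := (twoTGolden : Set ℍ[GoldenField]))
    (fun _ ↦ mem_twoIGolden_iff) twoTGolden_mul_mem twoIGolden_mul_zetaGolden_mem hx hy

theorem map_omegaGolden : Quaternion.map goldenEmbedding omegaGolden = omegaQ := by
  ext <;> simp [omegaGolden, omegaQ, map_ofNat]

theorem map_zetaGolden : Quaternion.map goldenEmbedding zetaGolden = zetaQ := by
  have h : tau⁻¹ = goldenRatio - 1 := inv_goldenRatio_eq_sub_one
  ext <;> simp only [zetaQ, h] <;> simp [zetaGolden, tau, map_ofNat]

theorem Q8_eq_image : Q8 = Quaternion.map goldenEmbedding '' q8Golden := by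
  change {1, -1, unitI ℝ, -unitI ℝ, unitJ ℝ, -unitJ ℝ, unitK ℝ, -unitK ℝ} = _
  simp [q8Golden, Set.image_insert_eq]

theorem twoT_eq_image : twoT = Quaternion.map goldenEmbedding '' twoTGolden := by
  simp only [twoT, twoTGolden, Q8_eq_image, Finset.coe_union, Finset.coe_image, Set.image_union,
    Set.image_image, map_mul, map_pow, map_omegaGolden]

theorem twoI_eq_image : twoI = Quaternion.map goldenEmbedding '' twoIGolden := by
  simp only [twoI, twoIGolden, twoT_eq_image, Finset.coe_union, Finset.coe_image, Set.image_union,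
    Set.image_image, map_mul, map_pow, map_zetaGolden]

/-- `2I` is a subgroup of the unit quaternions of order 120. -/
theorem stmt_9 :
    (∀ x ∈ twoI, normSq x = 1) ∧ (1 : ℍ[ℝ]) ∈ twoI ∧
    (∀ x ∈ twoI, ∀ y ∈ twoI, x * y ∈ twoI) ∧
    (∀ x ∈ twoI, x⁻¹ ∈ twoI) ∧
    twoI.ncard = 120 := by
  simp only [twoI_eq_image, Set.forall_mem_image]
  refine ⟨fun x hx ↦ ?_, ⟨1, one_mem_twoIGolden, map_one _⟩,
    fun x hx y hy ↦ ⟨x * y, twoIGolden_mul_mem hx hy, map_mul _ _ _⟩, fun x hx ↦ ?_, ?_⟩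
  · rw [Quaternion.normSq_map, normSq_eq_one_of_mem_twoIGolden x hx, map_one]
  · rw [Quaternion.inv_def, Quaternion.normSq_map, normSq_eq_one_of_mem_twoIGolden x hx, map_one,
      inv_one, one_smul, ← Quaternion.map_star]
    exact ⟨star x, star_mem_twoIGolden x hx, rfl⟩
  · rw [Set.ncard_image_of_injective _ (Quaternion.map_injective goldenEmbedding.injective),
      Set.ncard_coe_finset, card_twoIGolden]
end

section
/- Let X be a finite subset of S³ with ∑_{x∈X} P(x) = 0 for all harmonic polynomials P of homogeneous degree ℓ ∈ {2,4,10}, and suppose X is antipodal with |X| = 24. Then the set of inner products of distinct points of X is contained in {-1, -1/2, 0, 1/2}. -/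
/-!
`G(t) = 1024 t² (t + 1/2)² (t - 1/2)² ((t² - 7/8)² + 3/64)` is nonnegative and equals
`3 + 4 U₂(t) + 2 U₄(t) + U₁₀(t)`, where the Chebyshev polynomials `U_k` (the Gegenbauer polynomials
of index 1) give the zonal harmonics on `S³`: for `‖y‖ = 1`, `x ↦ U_k(⟪x, y⟫)` is the restriction
to the sphere of a harmonic polynomial homogeneous of degree `k`. For `y ∈ X` the design property
kills the sums of these harmonics over `X`, so `∑_{x ∈ X} G ⟪x, y⟫ = 3 · 24 = G 1 + G (-1)`.
As `G ≥ 0` and `±y ∈ X`, this forces `G ⟪x, y⟫ = 0`, i.e. `⟪x, y⟫ ∈ {0, ±1/2}`, for all other `x ∈ X`.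
-/

open MvPolynomial RealInnerProductSpace

lemma Finset.eq_zero_of_sum_eq_add_of_nonneg {ι M : Type*} [DecidableEq ι] [AddCommMonoid M]
    [PartialOrder M] [IsOrderedCancelAddMonoid M] {s : Finset ι} {f : ι → M}
    (hf : ∀ i ∈ s, 0 ≤ f i) {a b : ι} (ha : a ∈ s) (hb : b ∈ s) (hab : a ≠ b)
    (hsum : ∑ i ∈ s, f i = f a + f b) {i : ι} (hi : i ∈ s) (hia : i ≠ a) (hib : i ≠ b) :
    f i = 0 := by
  have hb' : b ∈ s.erase a := Finset.mem_erase.2 ⟨hab.symm, hb⟩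
  have hrest : ∑ j ∈ (s.erase a).erase b, f j = 0 := by
    rw [← Finset.add_sum_erase _ _ ha, ← Finset.add_sum_erase _ _ hb', ← add_assoc] at hsum
    exact add_eq_left.1 hsum
  refine (Finset.sum_eq_zero_iff_of_nonneg fun j hj => hf j ?_).1 hrest i ?_
  · exact Finset.mem_of_mem_erase (Finset.mem_of_mem_erase hj)
  · exact Finset.mem_erase.2 ⟨hib, Finset.mem_erase.2 ⟨hia, hi⟩⟩

namespace MvPolynomial

variable {σ R : Type*} [Fintype σ] [CommRing R]

noncomputable def laplacian : MvPolynomial σ R →ₗ[R] MvPolynomial σ R :=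
  ∑ i, (pderiv i).toLinearMap ∘ₗ (pderiv i).toLinearMap

lemma laplacian_apply (P : MvPolynomial σ R) : laplacian P = ∑ i, pderiv i (pderiv i P) := by
  simp [laplacian]

lemma laplacian_C_mul (c : R) (P : MvPolynomial σ R) : laplacian (C c * P) = C c * laplacian P := by
  rw [C_mul', map_smul, C_mul']

noncomputable def linearForm (y : σ → R) : MvPolynomial σ R := ∑ i, C (y i) * X i

noncomputable def sqNorm : MvPolynomial σ R := ∑ i, X i ^ 2

noncomputable def zonalMonomial (y : σ → R) (a b : ℕ) : MvPolynomial σ R :=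
  linearForm y ^ a * sqNorm ^ b

@[simp] lemma pderiv_linearForm (y : σ → R) (i : σ) : pderiv i (linearForm y) = C (y i) := by
  classical
  simp [linearForm, pderiv_X, Pi.single_apply]

@[simp] lemma pderiv_sqNorm (i : σ) : pderiv i (sqNorm : MvPolynomial σ R) = C 2 * X i := by
  classical
  simp [sqNorm, pderiv_X, Pi.single_apply]
  rfl

/-- Where an exponent `a - 2` or `b - 1` truncates, the coefficient in front of it vanishes. -/
lemma laplacian_zonalMonomial (y : σ → R) (a b : ℕ) :
    laplacian (zonalMonomial y a b) =
      ((a * (a - 1) : ℕ) : MvPolynomial σ R) * C (∑ i, y i ^ 2) * zonalMonomial y (a - 2) b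
        + ((2 * b * (Fintype.card σ + 2 * a + 2 * (b - 1)) : ℕ) : MvPolynomial σ R)
          * zonalMonomial y a (b - 1) := by
  simp only [zonalMonomial]
  set u := linearForm y
  set r : MvPolynomial σ R := sqNorm
  have hi : ∀ i, pderiv i (pderiv i (u ^ a * r ^ b)) =
      C (y i) ^ 2 * (((a * (a - 1) : ℕ) : MvPolynomial σ R) * u ^ (a - 2) * r ^ b)
        + C (y i) * X i * (((4 * a * b : ℕ) : MvPolynomial σ R) * u ^ (a - 1) * r ^ (b - 1))
        + X i ^ 2 * (4 * ((b * (b - 1) : ℕ) : MvPolynomial σ R) * u ^ a * r ^ (b - 2))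
        + ((2 * b : ℕ) : MvPolynomial σ R) * u ^ a * r ^ (b - 1) := by
    intro i
    simp only [u, r, map_add, pderiv_mul, pderiv_pow, pderiv_linearForm, pderiv_sqNorm, pderiv_C,
      pderiv_X_self, Derivation.map_natCast, Nat.sub_sub, Nat.reduceAdd]
    simp only [map_ofNat]
    push_cast
    ring
  have hsum : ∀ A B D E : MvPolynomial σ R,
      ∑ i, (C (y i) ^ 2 * A + C (y i) * X i * B + X i ^ 2 * D + E)
        = C (∑ i, y i ^ 2) * A + u * B + r * D + (Fintype.card σ : MvPolynomial σ R) * E := by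
    simp [u, r, Finset.sum_add_distrib, Finset.sum_mul, linearForm, sqNorm, map_sum]
  rw [laplacian_apply, Finset.sum_congr rfl fun i _ => hi i, hsum]
  rcases a with _ | a <;> rcases b with _ | _ | b <;> simp [pow_succ] <;> ring

lemma isHomogeneous_zonalMonomial (y : σ → R) (a b : ℕ) :
    (zonalMonomial y a b).IsHomogeneous (a + 2 * b) := by
  have hu : (linearForm y).IsHomogeneous 1 :=
    IsHomogeneous.sum _ _ _ fun i _ => isHomogeneous_C_mul_X _ _
  have hr : (sqNorm : MvPolynomial σ R).IsHomogeneous 2 :=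
    IsHomogeneous.sum _ _ _ fun i _ => isHomogeneous_X_pow _ _
  simpa [zonalMonomial, mul_comm] using (hu.pow a).mul (hr.pow b)

lemma eval_zonalMonomial (y x : σ → R) (a b : ℕ) :
    eval x (zonalMonomial y a b) = (∑ i, y i * x i) ^ a * (∑ i, x i ^ 2) ^ b := by
  simp [zonalMonomial, linearForm, sqNorm]

end MvPolynomial

section ZonalHarmonics

variable {R : Type*} [CommRing R]

local notation "Z" => zonalMonomial

/-! Homogenised Chebyshev polynomials: at a unit vector `x`, `zonalk y` takes the value
`U_k (∑ i, y i * x i)`. For `∑ i, y i ^ 2 = 1` they are the zonal harmonics of degree `k` on `S³`. -/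

noncomputable def zonal2 (y : Fin 4 → R) : MvPolynomial (Fin 4) R := C 4 * Z y 2 0 - Z y 0 1

noncomputable def zonal4 (y : Fin 4 → R) : MvPolynomial (Fin 4) R :=
  C 16 * Z y 4 0 - C 12 * Z y 2 1 + Z y 0 2

noncomputable def zonal10 (y : Fin 4 → R) : MvPolynomial (Fin 4) R :=
  C 1024 * Z y 10 0 - C 2304 * Z y 8 1 + C 1792 * Z y 6 2 - C 560 * Z y 4 3
    + C 60 * Z y 2 4 - Z y 0 5

lemma isHomogeneous_zonal2 (y : Fin 4 → R) : (zonal2 y).IsHomogeneous 2 :=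
  ((isHomogeneous_zonalMonomial y 2 0).C_mul _).sub (isHomogeneous_zonalMonomial y 0 1)

lemma isHomogeneous_zonal4 (y : Fin 4 → R) : (zonal4 y).IsHomogeneous 4 :=
  ((((isHomogeneous_zonalMonomial y 4 0).C_mul _).sub
    ((isHomogeneous_zonalMonomial y 2 1).C_mul _)).add (isHomogeneous_zonalMonomial y 0 2))

lemma isHomogeneous_zonal10 (y : Fin 4 → R) : (zonal10 y).IsHomogeneous 10 :=
  (((((((isHomogeneous_zonalMonomial y 10 0).C_mul _).sub
    ((isHomogeneous_zonalMonomial y 8 1).C_mul _)).add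
    ((isHomogeneous_zonalMonomial y 6 2).C_mul _)).sub
    ((isHomogeneous_zonalMonomial y 4 3).C_mul _)).add
    ((isHomogeneous_zonalMonomial y 2 4).C_mul _)).sub (isHomogeneous_zonalMonomial y 0 5))

variable {y : Fin 4 → R} (hy : ∑ i, y i ^ 2 = 1)
include hy

lemma laplacian_zonal2 : laplacian (zonal2 y) = 0 := by
  simp only [zonal2, map_sub, laplacian_C_mul, laplacian_zonalMonomial, hy, map_one]
  norm_num [map_ofNat]
  ring

lemma laplacian_zonal4 : laplacian (zonal4 y) = 0 := by
  simp only [zonal4, map_sub, map_add, laplacian_C_mul, laplacian_zonalMonomial, hy, map_one]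
  norm_num [map_ofNat]
  ring

lemma laplacian_zonal10 : laplacian (zonal10 y) = 0 := by
  simp only [zonal10, map_sub, map_add, laplacian_C_mul, laplacian_zonalMonomial, hy, map_one]
  norm_num [map_ofNat]
  ring

end ZonalHarmonics

lemma eval_ofLp_zonalMonomial {n : ℕ} (y x : EuclideanSpace ℝ (Fin n)) (a b : ℕ) :
    eval x.ofLp (zonalMonomial y.ofLp a b) = ⟪x, y⟫ ^ a * (‖x‖ ^ 2) ^ b := by
  rw [eval_zonalMonomial, EuclideanSpace.real_norm_sq_eq, PiLp.inner_apply]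
  simp

noncomputable def lpTestFun (t : ℝ) : ℝ :=
  1024 * t ^ 2 * (t + 1 / 2) ^ 2 * (t - 1 / 2) ^ 2 * ((t ^ 2 - 7 / 8) ^ 2 + 3 / 64)

lemma lpTestFun_nonneg (t : ℝ) : 0 ≤ lpTestFun t := by
  unfold lpTestFun; positivity

lemma lpTestFun_eq_zero_iff {t : ℝ} : lpTestFun t = 0 ↔ t = 0 ∨ t = -(1 / 2) ∨ t = 1 / 2 := by
  have : (t ^ 2 - 7 / 8) ^ 2 + 3 / 64 ≠ 0 := by positivity
  simp [lpTestFun, this, sub_eq_zero, add_eq_zero_iff_eq_neg, or_assoc]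

lemma lpTestFun_inner_eq {x y : EuclideanSpace ℝ (Fin 4)} (hx : ‖x‖ = 1) :
    lpTestFun ⟪x, y⟫ = 3 + 4 * eval x.ofLp (zonal2 y.ofLp) + 2 * eval x.ofLp (zonal4 y.ofLp)
      + eval x.ofLp (zonal10 y.ofLp) := by
  simp only [zonal2, zonal4, zonal10, map_add, map_sub, map_mul, eval_C,
    eval_ofLp_zonalMonomial, hx, lpTestFun]
  ring

lemma sum_lpTestFun_inner_eq (X : Finset (EuclideanSpace ℝ (Fin 4)))
    (hX : ∀ x ∈ X, ‖x‖ = 1)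
    (hdesign : ∀ ℓ ∈ ({2, 4, 10} : Set ℕ), ∀ P : MvPolynomial (Fin 4) ℝ,
      P.IsHomogeneous ℓ → (∑ i : Fin 4, pderiv i (pderiv i P)) = 0 →
      ∑ x ∈ X, eval (fun i => x i) P = 0)
    {y : EuclideanSpace ℝ (Fin 4)} (hy : ‖y‖ = 1) :
    ∑ x ∈ X, lpTestFun ⟪x, y⟫ = 3 * X.card := by
  have hy2 : ∑ i, y i ^ 2 = 1 := by rw [← EuclideanSpace.real_norm_sq_eq, hy, one_pow]
  have h2 := hdesign 2 (by simp) _ (isHomogeneous_zonal2 y.ofLp)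
    (by rw [← laplacian_apply, laplacian_zonal2 hy2])
  have h4 := hdesign 4 (by simp) _ (isHomogeneous_zonal4 y.ofLp)
    (by rw [← laplacian_apply, laplacian_zonal4 hy2])
  have h10 := hdesign 10 (by simp) _ (isHomogeneous_zonal10 y.ofLp)
    (by rw [← laplacian_apply, laplacian_zonal10 hy2])
  rw [Finset.sum_congr rfl fun x hx => lpTestFun_inner_eq (y := y) (hX x hx)]
  simp only [Finset.sum_add_distrib, ← Finset.mul_sum]
  simp [h2, h4, h10, mul_comm]

/-- If `X ⊂ S³` is an antipodal 24-point set which is a spherical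
`{2,4,10}`-design, then the inner products of distinct points of `X` lie in
`{-1, -1/2, 0, 1/2}`. -/
theorem stmt_18 (X : Finset (EuclideanSpace ℝ (Fin 4)))
    (hX : ∀ x ∈ X, ‖x‖ = 1) (hanti : ∀ x ∈ X, -x ∈ X)
    (hdesign : ∀ ℓ ∈ ({2, 4, 10} : Set ℕ), ∀ P : MvPolynomial (Fin 4) ℝ,
      P.IsHomogeneous ℓ → (∑ i : Fin 4, pderiv i (pderiv i P)) = 0 →
      ∑ x ∈ X, eval (fun i => x i) P = 0)
    (hcard : X.card = 24) :
    ∀ x ∈ X, ∀ y ∈ X, x ≠ y → ⟪x, y⟫ ∈ ({-1, -(1/2), 0, 1/2} : Set ℝ) := by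
  classical
  intro x hx y hy hxy
  have hyy : ⟪y, y⟫ = 1 := by rw [real_inner_self_eq_norm_sq, hX y hy, one_pow]
  have hny : -y ≠ y := fun h => by
    have := congrArg (⟪·, y⟫) h
    simp only [inner_neg_left, hyy] at this
    norm_num at this
  have hsum : ∑ z ∈ X, lpTestFun ⟪z, y⟫ = lpTestFun ⟪-y, y⟫ + lpTestFun ⟪y, y⟫ := by
    rw [sum_lpTestFun_inner_eq X hX hdesign (hX y hy), hcard, inner_neg_left, hyy]
    norm_num [lpTestFun]
  by_cases hxny : x = -y
  · rw [hxny, inner_neg_left, hyy]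
    simp
  · have h := Finset.eq_zero_of_sum_eq_add_of_nonneg (fun z _ => lpTestFun_nonneg _)
      (hanti y hy) hy hny hsum hx hxny hxy
    rcases lpTestFun_eq_zero_iff.1 h with h | h | h <;> simp [h]
end
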